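/- Let G be a finite O-connected digraph and F a subset of the vertices of G. If for some vertex v there are n distinct F-spanning trees of G with origin v, then there are at least n distinct directed spanning subtrees of G with origin v. In particular, if v lies in F, then the number of directed spanning subtrees of G with origin v is at least the number of directed spanning subtrees of the induced subgraph G[F] with origin v. -/

import Mathlib

/-!
Extend an `F`-spanning tree `T` with vertex set `W` to a spanning tree `S` by repeatedly adding an
edge that leaves the current vertex set; such an edge exists by `O`-connectedness, and each added
edge enters a vertex outside `W`. Since all leaves of `T` lie in `F`, every vertex of `W` reaches
`F` inside `T`, whereas a path in `S` that leaves `W` never comes back. So `T` is the set of edges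
of `S` whose target still reaches `F` in `S`, and `T ↦ S` is injective. A spanning tree of `G[F]`
with origin `v ∈ F` is an `F`-spanning tree of `G` with vertex set `F`.
-/

/-- A digraph: a (multi)graph in which multiple edges and loops are allowed,
together with an orientation.  An edge `e` runs from `src e` to `tgt e`. -/
structure MultiDigraph (V E : Type) where
  src : E → V
  tgt : E → V

namespace MultiDigraph

variable {V E : Type}

/-- One step from `a` to `b` along an edge belonging to `T`. -/
def step (G : MultiDigraph V E) (T : Set E) (a b : V) : Prop :=
  ∃ e ∈ T, G.src e = a ∧ G.tgt e = b

/-- Reachability by a directed path using only edges of `T`. -/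
def reach (G : MultiDigraph V E) (T : Set E) : V → V → Prop :=
  Relation.ReflTransGen (G.step T)

/-- `G` is `O`-connected: any vertex can be reached from any other by a
directed path. -/
def OConnected (G : MultiDigraph V E) : Prop :=
  ∀ u v : V, G.reach Set.univ u v

/-- The edge set `T` is a directed tree in `G` with origin `u` and vertex set
`W`: all edges of `T` join vertices of `W`, no edge of `T` ends at the origin
`u`, every other vertex of `W` is the terminal vertex of exactly one edge of
`T`, and every vertex of `W` is reachable from `u` through `T` (which forces
connectedness and the absence of cycles). -/
def IsDirTree (G : MultiDigraph V E) (u : V) (W : Set V) (T : Set E) : Prop :=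
  u ∈ W ∧
  (∀ e ∈ T, G.src e ∈ W ∧ G.tgt e ∈ W) ∧
  (∀ e ∈ T, G.tgt e ≠ u) ∧
  (∀ w ∈ W, w ≠ u → ∃! e, e ∈ T ∧ G.tgt e = w) ∧
  (∀ w ∈ W, G.reach T u w)

/-- A directed spanning subtree of `G` with origin `u` is a directed tree
whose vertex set is all of `V`. -/
def IsSpanTree (G : MultiDigraph V E) (u : V) (T : Set E) : Prop :=
  G.IsDirTree u Set.univ T

end MultiDigraph

namespace MultiDigraph

variable {V E : Type}

/-- The number of directed spanning subtrees of `G` with origin `u`. -/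
noncomputable def treeCount (G : MultiDigraph V E) (u : V) : ℕ :=
  Set.ncard {T : Set E | G.IsSpanTree u T}

/-- An `F`-spanning tree of `G` with origin `u`: a directed tree whose vertex
set contains `F` and all of whose leaves (vertices of the tree that are the
initial vertex of no tree edge) lie in `F`. -/
def IsFSpanTree (G : MultiDigraph V E) (u : V) (F : Set V)
    (W : Set V) (T : Set E) : Prop :=
  G.IsDirTree u W T ∧ F ⊆ W ∧
  ∀ w ∈ W, (∀ e ∈ T, G.src e ≠ w) → w ∈ F

/-- The subgraph of `G` induced by a set `F` of vertices. -/
def induce (G : MultiDigraph V E) (F : Set V) :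
    MultiDigraph F {e : E // G.src e ∈ F ∧ G.tgt e ∈ F} :=
  ⟨fun e => ⟨G.src e.1, e.2.1⟩, fun e => ⟨G.tgt e.1, e.2.2⟩⟩

end MultiDigraph

namespace MultiDigraph

variable {V E : Type} {G : MultiDigraph V E} {u v w : V} {W F : Set V} {T S : Set E}

lemma reach_mono (hTS : T ⊆ S) (h : G.reach T u w) : G.reach S u w :=
  Relation.ReflTransGen.mono (fun _ _ ⟨e, he, hs⟩ => ⟨e, hTS he, hs⟩) _ _ h

lemma exists_src_mem_tgt_notMem (huv : G.reach Set.univ u w) (hu : u ∈ W) (hw : w ∉ W) :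
    ∃ e, G.src e ∈ W ∧ G.tgt e ∉ W := by
  induction huv with
  | refl => exact absurd hu hw
  | @tail x y _ hxy ih =>
    by_cases hx : x ∈ W
    · obtain ⟨e, -, rfl, rfl⟩ := hxy
      exact ⟨e, hx, hw⟩
    · exact ih hx

namespace IsDirTree

lemma insert_edge (h : G.IsDirTree v W T) {e : E} (hsrc : G.src e ∈ W) (htgt : G.tgt e ∉ W) :
    G.IsDirTree v (insert (G.tgt e) W) (insert e T) := by
  obtain ⟨hv, hedges, hnotv, huniq, hreach⟩ := h
  have hT : T ⊆ insert e T := Set.subset_insert e T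
  refine ⟨Or.inr hv, ?_, ?_, ?_, ?_⟩
  · rintro e' (rfl | he')
    · exact ⟨Or.inr hsrc, Or.inl rfl⟩
    · exact ⟨Or.inr (hedges e' he').1, Or.inr (hedges e' he').2⟩
  · rintro e' (rfl | he')
    · exact fun hev => htgt (hev ▸ hv)
    · exact hnotv e' he'
  · rintro w (rfl | hw) hwv
    · refine ⟨e, ⟨Or.inl rfl, rfl⟩, ?_⟩
      rintro e' ⟨rfl | he', hte'⟩
      · rfl
      · exact absurd (hte' ▸ (hedges e' he').2) htgt
    · obtain ⟨e₀, he₀, hu⟩ := huniq w hw hwv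
      refine ⟨e₀, ⟨hT he₀.1, he₀.2⟩, ?_⟩
      rintro e' ⟨rfl | he', rfl⟩
      · exact absurd hw htgt
      · exact hu e' ⟨he', rfl⟩
  · rintro w (rfl | hw)
    · exact (reach_mono hT (hreach _ hsrc)).tail ⟨e, Or.inl rfl, rfl, rfl⟩
    · exact reach_mono hT (hreach w hw)

lemma exists_isSpanTree_extension [Finite V] (hconn : G.OConnected) (h : G.IsDirTree v W T) :
    ∃ S, G.IsSpanTree v S ∧ T ⊆ S ∧ ∀ e ∈ S \ T, G.tgt e ∉ W := by
  induction W using WellFoundedGT.induction generalizing T with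
  | _ W ih =>
  by_cases hW : W = Set.univ
  · subst hW
    exact ⟨T, h, subset_rfl, fun e he => absurd he.1 he.2⟩
  obtain ⟨x, hx⟩ := (Set.ne_univ_iff_exists_notMem W).mp hW
  obtain ⟨e, hsrc, htgt⟩ := exists_src_mem_tgt_notMem (hconn v x) h.1 hx
  obtain ⟨S, hS, hTS, hnew⟩ :=
    ih _ (Set.ssubset_insert htgt) (h.insert_edge hsrc htgt)
  refine ⟨S, hS, (Set.subset_insert e T).trans hTS, fun e' ⟨he'S, he'T⟩ hmem => ?_⟩
  by_cases he' : e' = e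
  · exact htgt (he' ▸ hmem)
  · exact hnew e' ⟨he'S, fun h' => h'.elim he' he'T⟩ (Or.inr hmem)

lemma tgt_mem (h : G.IsDirTree v W T) (hs : G.step T u w) : w ∈ W := by
  obtain ⟨e, he, -, rfl⟩ := hs
  exact (h.2.1 e he).2

lemma eq_of_step_of_step (h : G.IsDirTree v W T) {u' : V} (hu : G.step T u w)
    (hu' : G.step T u' w) : u = u' := by
  obtain ⟨e, he, rfl, rfl⟩ := hu
  obtain ⟨e', he', rfl, hte'⟩ := hu'
  obtain ⟨e₀, -, huniq⟩ := h.2.2.2.1 _ (h.2.1 e he).2 (h.2.2.1 e he)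
  rw [huniq e ⟨he, rfl⟩, huniq e' ⟨he', hte'⟩]

lemma acc_step (h : G.IsDirTree v W T) (hw : w ∈ W) : Acc (G.step T) w := by
  have hvw := h.2.2.2.2 w hw
  clear hw
  induction hvw with
  | refl => exact ⟨_, fun u ⟨e, he, _, hte⟩ => absurd hte (h.2.2.1 e he)⟩
  | @tail x y _ hxy ih =>
    exact ⟨_, fun u hu => h.eq_of_step_of_step hu hxy ▸ ih⟩

lemma not_transGen_self (h : G.IsDirTree v W T) (w : V) : ¬ Relation.TransGen (G.step T) w w := by
  intro hw
  obtain ⟨u, -, hu⟩ := Relation.TransGen.tail'_iff.mp hw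
  have hacc := (h.acc_step (h.tgt_mem hu)).transGen
  clear hu
  induction hacc with
  | intro x _ ih => exact ih x hw hw

lemma wellFounded_flip_step [Finite V] (h : G.IsDirTree v W T) :
    WellFounded (flip (G.step T)) := by
  let r := flip (Relation.TransGen (G.step T))
  have : IsTrans V r := ⟨fun _ _ _ h₁ h₂ => h₂.trans h₁⟩
  have : Std.Irrefl r := ⟨h.not_transGen_self⟩
  exact Subrelation.wf (r := r) (fun h => .single h) (Finite.wellFounded_of_trans_of_irrefl r)

end IsDirTree

lemma IsFSpanTree.exists_reach_mem [Finite V] (h : G.IsFSpanTree v F W T) (hw : w ∈ W) :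
    ∃ f ∈ F, G.reach T w f := by
  obtain ⟨hT, -, hleaf⟩ := h
  induction w using hT.wellFounded_flip_step.induction with
  | _ w ih =>
  by_cases hwF : w ∈ F
  · exact ⟨w, hwF, .refl⟩
  obtain ⟨e, he, rfl⟩ : ∃ e ∈ T, G.src e = w := by
    by_contra! hno
    exact hwF (hleaf w hw hno)
  have hstep : G.step T (G.src e) (G.tgt e) := ⟨e, he, rfl, rfl⟩
  obtain ⟨f, hf, hreach⟩ := ih _ hstep (hT.tgt_mem hstep)
  exact ⟨f, hf, .head hstep hreach⟩

lemma IsDirTree.notMem_of_reach_of_notMem (hT : G.IsDirTree v W T) (hS : G.IsSpanTree v S)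
    (hTS : T ⊆ S) (hr : G.reach S u w) (hu : u ∉ W) : w ∉ W := by
  induction hr with
  | refl => exact hu
  | @tail x y _ hxy ih =>
    intro hy
    obtain ⟨e, he, hsrc, rfl⟩ := hxy
    obtain ⟨e₀, ⟨he₀, hte₀⟩, -⟩ := hT.2.2.2.1 _ hy (hS.2.2.1 e he)
    have : G.src e₀ = x := hS.eq_of_step_of_step ⟨e₀, hTS he₀, rfl, hte₀⟩ ⟨e, he, hsrc, rfl⟩
    exact ih (this ▸ (hT.2.1 e₀ he₀).1)

lemma IsFSpanTree.eq_setOf_reach [Finite V] (hT : G.IsFSpanTree v F W T) (hS : G.IsSpanTree v S)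
    (hTS : T ⊆ S) (hnew : ∀ e ∈ S \ T, G.tgt e ∉ W) :
    T = {e ∈ S | ∃ f ∈ F, G.reach S (G.tgt e) f} := by
  ext e
  refine ⟨fun he => ⟨hTS he, ?_⟩, fun ⟨heS, f, hf, hreach⟩ => ?_⟩
  · obtain ⟨f, hf, hreach⟩ := hT.exists_reach_mem (hT.1.2.1 e he).2
    exact ⟨f, hf, reach_mono hTS hreach⟩
  · by_contra heT
    exact hT.1.notMem_of_reach_of_notMem hS hTS hreach (hnew e ⟨heS, heT⟩) (hT.2.1 hf)

lemma ncard_setOf_isFSpanTree_le_treeCount [Finite V] [Finite E] (hconn : G.OConnected) :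
    {T | ∃ W, G.IsFSpanTree v F W T}.ncard ≤ G.treeCount v := by
  have hsub : {T | ∃ W, G.IsFSpanTree v F W T} ⊆
      (fun S => {e ∈ S | ∃ f ∈ F, G.reach S (G.tgt e) f}) '' {S | G.IsSpanTree v S} := by
    rintro T ⟨W, hT⟩
    obtain ⟨S, hS, hTS, hnew⟩ := hT.1.exists_isSpanTree_extension hconn
    exact ⟨S, hS, (hT.eq_setOf_reach hS hTS hnew).symm⟩
  exact (Set.ncard_le_ncard hsub (Set.toFinite _)).trans (Set.ncard_image_le (Set.toFinite _))

lemma reach_val_image_of_reach_induce {T : Set {e : E // G.src e ∈ F ∧ G.tgt e ∈ F}} {a b : F}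
    (h : (G.induce F).reach T a b) : G.reach (Subtype.val '' T) a b := by
  induction h with
  | refl => exact .refl
  | tail _ hstep ih =>
    obtain ⟨e, he, rfl, rfl⟩ := hstep
    exact ih.tail ⟨e, ⟨e, he, rfl⟩, rfl, rfl⟩

lemma IsSpanTree.isFSpanTree_val_image {T : Set {e : E // G.src e ∈ F ∧ G.tgt e ∈ F}}
    (hv : v ∈ F) (hT : (G.induce F).IsSpanTree ⟨v, hv⟩ T) :
    G.IsFSpanTree v F F (Subtype.val '' T) := by
  obtain ⟨-, -, hnotv, huniq, hreach⟩ := hT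
  refine ⟨⟨hv, ?_, ?_, ?_, fun w hw => reach_val_image_of_reach_induce (hreach ⟨w, hw⟩ trivial)⟩,
    subset_rfl, fun w hw _ => hw⟩
  · rintro _ ⟨e, -, rfl⟩
    exact e.2
  · rintro _ ⟨e, he, rfl⟩ hev
    exact hnotv e he (Subtype.ext hev)
  · intro w hw hwv
    obtain ⟨e, ⟨he, hte⟩, hu⟩ := huniq ⟨w, hw⟩ trivial (fun h => hwv (congrArg Subtype.val h))
    refine ⟨e, ⟨⟨e, he, rfl⟩, congrArg Subtype.val hte⟩, ?_⟩
    rintro _ ⟨⟨e', he', rfl⟩, hte'⟩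
    exact congrArg Subtype.val (hu e' ⟨he', Subtype.ext hte'⟩)

lemma treeCount_induce_le_ncard_setOf_isFSpanTree [Finite E] (hv : v ∈ F) :
    (G.induce F).treeCount ⟨v, hv⟩ ≤ {T | ∃ W, G.IsFSpanTree v F W T}.ncard :=
  Set.ncard_le_ncard_of_injOn (Subtype.val '' ·)
    (fun _ hT => ⟨F, hT.isFSpanTree_val_image hv⟩)
    (Set.image_injective.mpr Subtype.val_injective).injOn (Set.toFinite _)

end MultiDigraph

/-- **Lemma on F-spanning trees.**  Let `G` be a finite `O`-connected digraph
and `F` a set of vertices.  If there are at least `n` distinct `F`-spanning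
trees of `G` with origin `v`, then `G` has at least `n` directed spanning
subtrees with origin `v`.  In particular, if `v ∈ F` then the number of
directed spanning subtrees of `G` with origin `v` is at least the number of
directed spanning subtrees of the induced subgraph `G[F]` with origin `v`. -/
theorem le_treeCount_of_FSpanTrees {V E : Type} [Finite V] [Finite E]
    (G : MultiDigraph V E) (hconn : G.OConnected) (F : Set V) (v : V) :
    (∀ n : ℕ, n ≤ Set.ncard {T : Set E | ∃ W, G.IsFSpanTree v F W T} →
      n ≤ G.treeCount v) ∧
    (∀ hv : v ∈ F, (G.induce F).treeCount ⟨v, hv⟩ ≤ G.treeCount v) := by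
  have hFSpan := G.ncard_setOf_isFSpanTree_le_treeCount (F := F) (v := v) hconn
  exact ⟨fun _ hn => hn.trans hFSpan,
    fun hv => (G.treeCount_induce_le_ncard_setOf_isFSpanTree hv).trans hFSpan⟩
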